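/- arXiv:1207.1565 — 4 statements merged into one kernel-verified Lean document; each statement's English description precedes it below -/
import Mathlib

section
/- For every integer j ≥ 1 and every integer i ≥ 0, the function ℂ → ℂ defined by w ↦ w̄^{i+j}/w^i for w ≠ 0 and by 0 at w = 0 is of class C^{j−1} on ℂ (viewing ℂ as ℝ²). -/
/-!
Write `f i j w = w̄^{i+j} / w^i` (and `0` at `0`). Off the origin, the real derivative of
`f i (j+1)` is `u ↦ -i f (i+1) j w · u + (i+j+1) f i j w · ū`, a combination of two functions of
the same family with one less power of `w̄` and constant coefficients. At the origin the derivative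
vanishes once `j + 1 ≥ 2`, because `|f i j w| = |w|^j`. Hence, by induction on `k`, every
`f i (k+1)` is `C^k`: `f i 1` is continuous, and the derivative of `f i (k+2)` is built from
`f (i+1) (k+1)` and `f i (k+1)`, which are `C^k`.
-/

open ComplexConjugate Filter Asymptotics Topology

noncomputable def conjPowDivPow (i j : ℕ) (w : ℂ) : ℂ :=
  if w = 0 then 0 else conj w ^ (i + j) / w ^ i

@[simp] lemma conjPowDivPow_zero (i j : ℕ) : conjPowDivPow i j 0 = 0 := if_pos rfl

lemma conjPowDivPow_of_ne_zero (i j : ℕ) {w : ℂ} (hw : w ≠ 0) :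
    conjPowDivPow i j w = conj w ^ (i + j) / w ^ i := if_neg hw

lemma conjPowDivPow_eventuallyEq (i j : ℕ) {w : ℂ} (hw : w ≠ 0) :
    conjPowDivPow i j =ᶠ[𝓝 w] fun z => conj z ^ (i + j) / z ^ i := by
  filter_upwards [eventually_ne_nhds hw] with z hz using conjPowDivPow_of_ne_zero i j hz

lemma norm_conjPowDivPow (i : ℕ) {j : ℕ} (hj : j ≠ 0) (w : ℂ) :
    ‖conjPowDivPow i j w‖ = ‖w‖ ^ j := by
  rcases eq_or_ne w 0 with rfl | hw
  · simp [hj]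
  · rw [conjPowDivPow_of_ne_zero i j hw, norm_div, norm_pow, norm_pow, RCLike.norm_conj, pow_add,
      mul_div_cancel_left₀ _ (pow_ne_zero i (norm_ne_zero_iff.2 hw))]

lemma continuous_conjPowDivPow (i : ℕ) {j : ℕ} (hj : j ≠ 0) : Continuous (conjPowDivPow i j) := by
  refine continuous_iff_continuousAt.2 fun w => ?_
  rcases eq_or_ne w 0 with rfl | hw
  · rw [ContinuousAt, conjPowDivPow_zero]
    refine squeeze_zero_norm (fun z => (norm_conjPowDivPow i hj z).le) ?_
    exact (continuous_norm.pow j).tendsto' 0 0 (by simp [hj])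
  · refine ContinuousAt.congr ?_ (conjPowDivPow_eventuallyEq i j hw).symm
    exact (Complex.continuous_conj.pow (i + j)).continuousAt.div
      (continuous_pow i).continuousAt (pow_ne_zero i hw)

noncomputable def conjPowDivPowFDeriv (i j : ℕ) (w : ℂ) : ℂ →L[ℝ] ℂ :=
  (-(i : ℂ) * conjPowDivPow (i + 1) j w) • (1 : ℂ →L[ℝ] ℂ)
    + (((i + j + 1 : ℕ) : ℂ) * conjPowDivPow i j w) • (Complex.conjCLE : ℂ →L[ℝ] ℂ)

lemma hasFDerivAt_conjPowDivPow_of_ne_zero (i j : ℕ) {w : ℂ} (hw : w ≠ 0) :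
    HasFDerivAt (conjPowDivPow i (j + 1)) (conjPowDivPowFDeriv i j w) w := by
  have hconj : HasFDerivAt (fun z => conj z) (Complex.conjCLE : ℂ →L[ℝ] ℂ) w :=
    Complex.conjCLE.hasFDerivAt
  have hinv : HasFDerivAt (fun z : ℂ => (z ^ i)⁻¹) _ w :=
    (hasFDerivAt_inv' (𝕜 := ℝ) (pow_ne_zero i hw)).comp w ((hasFDerivAt_id w).pow i)
  refine ((hconj.pow (i + j + 1)).mul hinv).congr_of_eventuallyEq ?_ |>.congr_fderiv ?_
  · filter_upwards [eventually_ne_nhds hw] with z hz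
    rw [conjPowDivPow_of_ne_zero _ _ hz, div_eq_mul_inv, add_assoc]
    rfl
  · ext u
    rcases i with _ | i
    · simp [conjPowDivPowFDeriv, conjPowDivPow_of_ne_zero _ _ hw]
    · simp [conjPowDivPowFDeriv, conjPowDivPow_of_ne_zero _ _ hw]
      field_simp
      ring

lemma hasFDerivAt_conjPowDivPow_zero (i : ℕ) {j : ℕ} (hj : 2 ≤ j) :
    HasFDerivAt (conjPowDivPow i j) (0 : ℂ →L[ℝ] ℂ) 0 :=
  (IsBigO.of_norm_le fun z => by simp [norm_conjPowDivPow i (by omega : j ≠ 0)]).hasFDerivAt hj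

lemma hasFDerivAt_conjPowDivPow (i : ℕ) {j : ℕ} (hj : j ≠ 0) (w : ℂ) :
    HasFDerivAt (conjPowDivPow i (j + 1)) (conjPowDivPowFDeriv i j w) w := by
  rcases eq_or_ne w 0 with rfl | hw
  · convert hasFDerivAt_conjPowDivPow_zero i (j := j + 1) (by omega)
    ext u
    simp [conjPowDivPowFDeriv]
  · exact hasFDerivAt_conjPowDivPow_of_ne_zero i j hw

lemma contDiff_conjPowDivPowFDeriv {i j : ℕ} {n : WithTop ℕ∞}
    (h₁ : ContDiff ℝ n (conjPowDivPow (i + 1) j)) (h₂ : ContDiff ℝ n (conjPowDivPow i j)) :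
    ContDiff ℝ n (conjPowDivPowFDeriv i j) :=
  ((contDiff_const.mul h₁).smul contDiff_const).add ((contDiff_const.mul h₂).smul contDiff_const)

lemma contDiff_conjPowDivPow (k i : ℕ) : ContDiff ℝ k (conjPowDivPow i (k + 1)) := by
  induction k generalizing i with
  | zero => exact contDiff_zero.2 (continuous_conjPowDivPow i one_ne_zero)
  | succ k ih =>
    exact contDiff_succ_iff_hasFDerivAt.2 ⟨conjPowDivPowFDeriv i (k + 1),
      contDiff_conjPowDivPowFDeriv (ih (i + 1)) (ih i),
      hasFDerivAt_conjPowDivPow i k.succ_ne_zero⟩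

/-- For every integer `j ≥ 1` and every integer `i ≥ 0`, the function `ℂ → ℂ` defined by
`w ↦ w̄^{i+j} / w^i` for `w ≠ 0` and by `0` at `w = 0` is of class `C^{j-1}` on `ℂ`
(viewed as a map `ℝ² → ℝ²`). -/
theorem conj_pow_div_pow_contDiff (j : ℕ) (hj : 1 ≤ j) (i : ℕ) :
    ContDiff ℝ ((j - 1 : ℕ) : ℕ∞)
      (fun w : ℂ => if w = 0 then 0 else (starRingEnd ℂ w) ^ (i + j) / w ^ i) := by
  obtain ⟨k, rfl⟩ := Nat.exists_eq_add_of_le' hj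
  exact contDiff_conjPowDivPow k i
end

section
/- Let 𝒰 ⊆ ℂ, let α, β : 𝒰 → ℂ be functions, and let z₁, …, z_n be pairwise distinct points of 𝒰. Then the divided difference of the product satisfies (α·β)[z₁, …, z_n] = Σ_{k=1}^n α[z₁, …, z_k] · β[z_k, …, z_n]. -/
noncomputable section

/-- Divided differences of `h` at a list of points:
`h[z] = h z` and `h[z₁,…,z_{k+1}] = (h[z₁,…,z_k] - h[z₂,…,z_{k+1}])/(z₁ - z_{k+1})`. -/
def divDiff (h : ℂ → ℂ) : List ℂ → ℂ
  | [] => 0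
  | [z] => h z
  | z :: w :: l =>
      (divDiff h (z :: (w :: l).dropLast) - divDiff h (w :: l)) /
        (z - (w :: l).getLast (List.cons_ne_nil w l))
termination_by l => l.length
decreasing_by
  · simp [List.length_dropLast]
  · simp

/-!
Both sides obey the defining recurrence `(z₁ - zₙ)·F[z₁,…,zₙ] = F[z₁,…,zₙ₋₁] - F[z₂,…,zₙ]`,
so the formula follows by induction on `n`. For the right-hand side, expand
`β[zₖ,…,zₙ₋₁] = (zₖ - zₙ)·β[zₖ,…,zₙ] + β[zₖ₊₁,…,zₙ]` in the sum for `z₁,…,zₙ₋₁` and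
`α[z₂,…,zₖ₊₁] = α[z₁,…,zₖ] - (z₁ - zₖ₊₁)·α[z₁,…,zₖ₊₁]` in the sum for `z₂,…,zₙ`;
the difference of the two sums then telescopes to `(z₁ - zₙ)` times the sum for `z₁,…,zₙ`.
-/

lemma List.Nodup.getD_ne_getD {γ : Type*} {l : List γ} (hl : l.Nodup) (d : γ) {i j : ℕ}
    (hij : i < j) (hj : j < l.length) : l.getD i d ≠ l.getD j d := by
  rw [List.getD_eq_getElem _ _ (hij.trans hj), List.getD_eq_getElem _ _ hj, Ne,
    hl.getElem_inj_iff]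
  exact hij.ne

lemma divDiff_dropLast_sub_tail (h : ℂ → ℂ) {l : List ℂ} (hl : 2 ≤ l.length)
    (hne : l.getD 0 0 ≠ l.getD (l.length - 1) 0) :
    divDiff h l.dropLast - divDiff h l.tail =
      (l.getD 0 0 - l.getD (l.length - 1) 0) * divDiff h l := by
  match l, hl with
  | z :: w :: t, _ =>
    have hlast : (w :: t).getLast (List.cons_ne_nil w t) = (z :: w :: t).getD (t.length + 1) 0 := by
      simp [List.getLast_eq_getElem]
    simp only [List.length_cons, Nat.add_sub_cancel] at hne ⊢
    rw [divDiff, hlast]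
    exact (mul_div_cancel₀ _ (sub_ne_zero.mpr hne)).symm

lemma divDiff_drop_dropLast (h : ℂ → ℂ) {l : List ℂ} {k : ℕ} (hk : k + 2 ≤ l.length)
    (hne : l.getD k 0 ≠ l.getD (l.length - 1) 0) :
    divDiff h (l.dropLast.drop k) =
      (l.getD k 0 - l.getD (l.length - 1) 0) * divDiff h (l.drop k) +
        divDiff h (l.drop (k + 1)) := by
  have hlast : k + ((l.drop k).length - 1) = l.length - 1 := by simp; omega
  have := divDiff_dropLast_sub_tail h (l := l.drop k) (by simp; omega)
    (by simpa only [List.getD_eq_getElem?_getD, List.getElem?_drop, hlast, add_zero])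
  simp only [List.dropLast_drop_eq_drop_dropLast, List.tail_drop, List.getD_eq_getElem?_getD,
    List.getElem?_drop, hlast, add_zero] at this
  simpa only [List.getD_eq_getElem?_getD, sub_eq_iff_eq_add] using this

lemma divDiff_tail_take (h : ℂ → ℂ) {l : List ℂ} {k : ℕ} (hk : k + 2 ≤ l.length)
    (hne : l.getD 0 0 ≠ l.getD (k + 1) 0) :
    divDiff h (l.tail.take (k + 1)) =
      divDiff h (l.take (k + 1)) -
        (l.getD 0 0 - l.getD (k + 1) 0) * divDiff h (l.take (k + 2)) := by
  have hlen : (l.take (k + 2)).length - 1 = k + 1 := by simp; omega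
  have := divDiff_dropLast_sub_tail h (l := l.take (k + 2)) (by simp; omega)
    (by simpa only [hlen, List.getD_eq_getElem?_getD,
      List.getElem?_take_of_lt (by omega : 0 < k + 2),
      List.getElem?_take_of_lt (by omega : k + 1 < k + 2)])
  have hdropLast : (l.take (k + 2)).dropLast = l.take (k + 1) := by
    rw [List.dropLast_eq_take, hlen, List.take_take, min_eq_left (by omega)]
  have htail : (l.take (k + 2)).tail = l.tail.take (k + 1) := List.tail_take_eq_take_tail l (k + 2)
  rw [hdropLast, htail, hlen] at this
  simp only [List.getD_eq_getElem?_getD, List.getElem?_take_of_lt (by omega : 0 < k + 2),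
    List.getElem?_take_of_lt (by omega : k + 1 < k + 2)] at this
  simp only [List.getD_eq_getElem?_getD]
  linear_combination -this

lemma sum_range_leibniz_step (A B z : ℕ → ℂ) (n : ℕ) :
    ∑ k ∈ Finset.range n, A k * ((z k - z n) * B k + B (k + 1))
      - ∑ k ∈ Finset.range n, (A k - (z 0 - z (k + 1)) * A (k + 1)) * B (k + 1)
    = (z 0 - z n) * ∑ k ∈ Finset.range (n + 1), A k * B k := by
  calc _ = ∑ k ∈ Finset.range n,
          ((z k - z n) * (A k * B k) + (z 0 - z (k + 1)) * (A (k + 1) * B (k + 1))) := by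
        rw [← Finset.sum_sub_distrib]
        exact Finset.sum_congr rfl fun k _ => by ring
    _ = ∑ k ∈ Finset.range (n + 1), (z k - z n) * (A k * B k)
        + ∑ k ∈ Finset.range (n + 1), (z 0 - z k) * (A k * B k) := by
        rw [Finset.sum_range_succ, Finset.sum_range_succ']
        simp only [sub_self, zero_mul, add_zero, Finset.sum_add_distrib]
    _ = _ := by
        rw [← Finset.sum_add_distrib, Finset.mul_sum]
        exact Finset.sum_congr rfl fun k _ => by ring

def leibnizSum (α β : ℂ → ℂ) (l : List ℂ) : ℂ :=
  ∑ k ∈ Finset.range l.length, divDiff α (l.take (k + 1)) * divDiff β (l.drop k)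

lemma leibnizSum_dropLast_sub_tail (α β : ℂ → ℂ) {l : List ℂ} (hl : 2 ≤ l.length)
    (hdist : l.Nodup) :
    leibnizSum α β l.dropLast - leibnizSum α β l.tail =
      (l.getD 0 0 - l.getD (l.length - 1) 0) * leibnizSum α β l := by
  obtain ⟨n, hn⟩ : ∃ n, l.length = n + 1 := ⟨l.length - 1, by omega⟩
  have hdropLast_term (k) (hk : k ∈ Finset.range n) :
      divDiff α (l.dropLast.take (k + 1)) * divDiff β (l.dropLast.drop k) =
        divDiff α (l.take (k + 1)) *
          ((l.getD k 0 - l.getD n 0) * divDiff β (l.drop k) + divDiff β (l.drop (k + 1))) := by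
    have hk : k < n := Finset.mem_range.mp hk
    have htake : l.dropLast.take (k + 1) = l.take (k + 1) := by
      rw [List.dropLast_eq_take, List.take_take, min_eq_left (by omega)]
    rw [htake, divDiff_drop_dropLast β (by omega) (hdist.getD_ne_getD 0 (by omega) (by omega)), hn,
      Nat.add_sub_cancel]
  have htail_term (k) (hk : k ∈ Finset.range n) :
      divDiff α (l.tail.take (k + 1)) * divDiff β (l.tail.drop k) =
        (divDiff α (l.take (k + 1)) - (l.getD 0 0 - l.getD (k + 1) 0) * divDiff α (l.take (k + 2)))
          * divDiff β (l.drop (k + 1)) := by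
    have hk : k < n := Finset.mem_range.mp hk
    rw [divDiff_tail_take α (by omega) (hdist.getD_ne_getD 0 (by omega) (by omega)), List.drop_tail]
  simp only [leibnizSum, List.length_dropLast, List.length_tail, hn, Nat.add_sub_cancel]
  rw [Finset.sum_congr rfl hdropLast_term, Finset.sum_congr rfl htail_term]
  exact sum_range_leibniz_step (fun k => divDiff α (l.take (k + 1))) (fun k => divDiff β (l.drop k))
    (fun k => l.getD k 0) n

theorem divDiff_mul_general (α β : ℂ → ℂ) (l : List ℂ)
    (hdist : l.Pairwise (· ≠ ·)) :
    divDiff (fun z => α z * β z) l =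
      ∑ k ∈ Finset.range l.length, divDiff α (l.take (k + 1)) * divDiff β (l.drop k) := by
  show _ = leibnizSum α β l
  induction hn : l.length generalizing l with
  | zero => simp [List.length_eq_zero_iff.mp hn, divDiff, leibnizSum]
  | succ n ih =>
    rcases n with _ | n
    · obtain ⟨z, rfl⟩ := List.length_eq_one_iff.mp hn
      simp [divDiff, leibnizSum]
    · have hl : 2 ≤ l.length := by omega
      have hd := List.Nodup.getD_ne_getD hdist 0 (i := 0) (j := l.length - 1) (by omega) (by omega)
      have ih_dropLast := ih l.dropLast (hdist.sublist l.dropLast_sublist) (by simp [hn])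
      have ih_tail := ih l.tail (hdist.sublist l.tail_sublist) (by simp [hn])
      refine mul_left_cancel₀ (sub_ne_zero.mpr hd) ?_
      rw [← divDiff_dropLast_sub_tail _ hl hd, ← leibnizSum_dropLast_sub_tail α β hl hdist,
        ih_dropLast, ih_tail]

/-- Leibniz-type formula for divided differences of a product:
`(α·β)[z₁,…,z_n] = Σ_{k=1}^n α[z₁,…,z_k] · β[z_k,…,z_n]` for pairwise distinct points
`z₁,…,z_n` of `𝒰 ⊆ ℂ`. -/
theorem divDiff_mul (𝒰 : Set ℂ) (α β : ℂ → ℂ) (l : List ℂ)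
    (hne : l ≠ []) (hmem : ∀ z ∈ l, z ∈ 𝒰) (hdist : l.Pairwise (· ≠ ·)) :
    divDiff (fun z => α z * β z) l =
      ∑ k ∈ Finset.range l.length, divDiff α (l.take (k + 1)) * divDiff β (l.drop k) :=
  divDiff_mul_general α β l hdist

end
end

section
/- There exist a neighborhood 𝒰 of bD and a constant c₁ > 0 such that the function δ(z,ζ) := inf{ε > 0 : ζ ∈ P_ε(z)} satisfies, for all z, ζ, ξ ∈ 𝒰: (1) (1/c₁) δ(ζ,z) ≤ δ(z,ζ) ≤ c₁ δ(ζ,z); (2) δ(z,ζ) ≤ c₁ (δ(z,ξ) + δ(ξ,ζ)). -/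
/-!
Since `η ζ, v ζ` is an orthonormal basis of `ℂ²`, the point `ζ + λ η ζ + μ v ζ` lies in `P_ε(ζ)`
exactly when `|λ| < ε` and `|μ|² < ε`, so `δ(z, ζ) = max (|⟪η z, ζ - z⟫|, |⟪v z, ζ - z⟫|²)`,
and by Parseval `|ζ - z|² ≤ (diam 𝒰 + 1) δ(z, ζ)`. Moving the base point of the normal
component from `z` to `ζ` costs `|η ζ - η z| |ζ - z| ≤ L |ζ - z|²`, where `L` is a Lipschitz
constant of `η` on a compact neighbourhood of `bD` (compact because strict convexity puts `bD`
in the closure of the bounded set `D`); so this error, like the tangential components, is `O(δ)`.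
-/

noncomputable section

open Set

/-- The Koranyi ball of radius `r` centered at `ζ`, relative to the unit normal field `η`
and the tangent field `v`. -/
def kball {E : Type*} [NormedAddCommGroup E] [NormedSpace ℂ E]
    (η v : E → E) (r : ℝ) (ζ : E) : Set E :=
  {z | ∃ lam mu : ℂ, z = ζ + lam • η ζ + mu • v ζ ∧
    ‖lam‖ < r ∧ ‖mu‖ < Real.sqrt r}

/-- The Koranyi pseudo-distance `δ(z,ζ) = inf {ε > 0 : ζ ∈ P_ε(z)}`. -/
def kdist {E : Type*} [NormedAddCommGroup E] [NormedSpace ℂ E]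
    (η v : E → E) (z ζ : E) : ℝ :=
  sInf {ε : ℝ | 0 < ε ∧ ζ ∈ kball η v ε z}

open Metric Module
open scoped InnerProductSpace NNReal

theorem StrictConvexOn.setOf_le_subset_closure_setOf_lt {E : Type*} [AddCommGroup E]
    [TopologicalSpace E] [ContinuousAdd E] [Module ℝ E] [ContinuousSMul ℝ E] {f : E → ℝ}
    (hf : StrictConvexOn ℝ univ f) {c : ℝ} (hne : {x | f x < c}.Nonempty) :
    {x | f x ≤ c} ⊆ closure {x | f x < c} := by
  obtain ⟨y, hy⟩ := hne
  intro x hx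
  rcases eq_or_ne y x with rfl | hyx
  · exact subset_closure hy
  have hsegment : openSegment ℝ y x ⊆ {x | f x < c} := fun z hz =>
    (hf.lt_on_openSegment (mem_univ y) (mem_univ x) hyx hz).trans_le (max_le hy.le hx)
  exact closure_mono hsegment (segment_subset_closure_openSegment (right_mem_segment ℝ y x))

theorem ContDiffOn.exists_lipschitzOnWith_of_isCompact_subset {E F : Type*}
    [NormedAddCommGroup E] [NormedSpace ℝ E] [NormedAddCommGroup F] [NormedSpace ℝ F]
    {f : E → F} {U K : Set E} {n : WithTop ℕ∞} (hf : ContDiffOn ℝ n f U) (hn : n ≠ 0)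
    (hU : IsOpen U) (hK : IsCompact K) (hKU : K ⊆ U) : ∃ L, LipschitzOnWith L f K := by
  refine LocallyLipschitzOn.exists_lipschitzOnWith_of_compact hK fun x hx => ?_
  have hf₁ : ContDiffAt ℝ 1 f x :=
    (hf.contDiffAt (hU.mem_nhds (hKU hx))).of_le (ENat.one_le_iff_ne_zero_withTop.2 hn)
  obtain ⟨L, t, ht, hL⟩ := hf₁.exists_lipschitzOnWith
  exact ⟨L, t, nhdsWithin_le_nhds ht, hL⟩

section OrthonormalPair

variable {𝕜 E : Type*} [RCLike 𝕜] [NormedAddCommGroup E] [InnerProductSpace 𝕜 E]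
  {e₁ e₂ : E}

theorem Orthonormal.exists_orthonormalBasis_of_finrank_eq_two
    (hE : finrank 𝕜 E = 2) (h : Orthonormal 𝕜 ![e₁, e₂]) :
    ∃ b : OrthonormalBasis (Fin 2) 𝕜 E, ⇑b = ![e₁, e₂] := by
  have : FiniteDimensional 𝕜 E := Module.finite_of_finrank_eq_succ hE
  refine ⟨(basisOfOrthonormalOfCardEqFinrank h (by simp [hE])).toOrthonormalBasis ?_, ?_⟩
  · rwa [coe_basisOfOrthonormalOfCardEqFinrank]
  · simp

theorem Orthonormal.eq_inner_smul_add_inner_smul (hE : finrank 𝕜 E = 2)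
    (h : Orthonormal 𝕜 ![e₁, e₂]) (w : E) : w = ⟪e₁, w⟫_𝕜 • e₁ + ⟪e₂, w⟫_𝕜 • e₂ := by
  obtain ⟨b, hb⟩ := h.exists_orthonormalBasis_of_finrank_eq_two hE
  simpa [Fin.sum_univ_two, hb] using (b.sum_repr' w).symm

theorem Orthonormal.sq_norm_eq_of_finrank_eq_two (hE : finrank 𝕜 E = 2)
    (h : Orthonormal 𝕜 ![e₁, e₂]) (w : E) : ‖w‖ ^ 2 = ‖⟪e₁, w⟫_𝕜‖ ^ 2 + ‖⟪e₂, w⟫_𝕜‖ ^ 2 := by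
  obtain ⟨b, hb⟩ := h.exists_orthonormalBasis_of_finrank_eq_two hE
  simpa [Fin.sum_univ_two, hb] using (b.sum_sq_norm_inner_right w).symm

end OrthonormalPair

section InnerBounds

variable {𝕜 E : Type*} [RCLike 𝕜] [NormedAddCommGroup E] [InnerProductSpace 𝕜 E]

variable (𝕜) in
theorem norm_inner_le_of_norm_eq_one {e : E} (he : ‖e‖ = 1) (w : E) : ‖⟪e, w⟫_𝕜‖ ≤ ‖w‖ :=
  (norm_inner_le_norm e w).trans_eq (by rw [he, one_mul])

variable (𝕜) in
theorem norm_inner_le_norm_inner_add (a b w : E) :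
    ‖⟪a, w⟫_𝕜‖ ≤ ‖⟪b, w⟫_𝕜‖ + ‖a - b‖ * ‖w‖ := by
  calc ‖⟪a, w⟫_𝕜‖ = ‖⟪b, w⟫_𝕜 + ⟪a - b, w⟫_𝕜‖ := by rw [inner_sub_left, add_sub_cancel]
    _ ≤ ‖⟪b, w⟫_𝕜‖ + ‖a - b‖ * ‖w‖ :=
      (norm_add_le _ _).trans (by gcongr; exact norm_inner_le_norm _ _)

end InnerBounds

section Koranyi

variable {E : Type*} [NormedAddCommGroup E] [InnerProductSpace ℂ E] {η v : E → E}

theorem mem_kball_iff (hE : finrank ℂ E = 2) {z : E} (hz : Orthonormal ℂ ![η z, v z])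
    {r : ℝ} {ζ : E} :
    ζ ∈ kball η v r z ↔ ‖⟪η z, ζ - z⟫_ℂ‖ < r ∧ ‖⟪v z, ζ - z⟫_ℂ‖ ^ 2 < r := by
  simp only [kball, mem_ofPred_eq]
  constructor
  · rintro ⟨lam, mu, rfl, hlam, hmu⟩
    have hsum : lam • η z + mu • v z = ∑ i, ![lam, mu] i • ![η z, v z] i := by
      simp [Fin.sum_univ_two]
    have hη : ⟪η z, lam • η z + mu • v z⟫_ℂ = lam := by
      rw [hsum]; exact hz.inner_right_fintype ![lam, mu] 0
    have hv : ⟪v z, lam • η z + mu • v z⟫_ℂ = mu := by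
      rw [hsum]; exact hz.inner_right_fintype ![lam, mu] 1
    rw [add_assoc, add_sub_cancel_left, hη, hv]
    exact ⟨hlam, (Real.lt_sqrt (norm_nonneg mu)).1 hmu⟩
  · rintro ⟨hlam, hmu⟩
    refine ⟨_, _, ?_, hlam, (Real.lt_sqrt (norm_nonneg _)).2 hmu⟩
    rw [add_assoc, ← hz.eq_inner_smul_add_inner_smul hE, add_sub_cancel]

theorem kdist_eq_max (hE : finrank ℂ E = 2) {z : E} (hz : Orthonormal ℂ ![η z, v z]) (ζ : E) :
    kdist η v z ζ = max ‖⟪η z, ζ - z⟫_ℂ‖ (‖⟪v z, ζ - z⟫_ℂ‖ ^ 2) := by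
  have hset : {ε : ℝ | 0 < ε ∧ ζ ∈ kball η v ε z} =
      Ioi (max ‖⟪η z, ζ - z⟫_ℂ‖ (‖⟪v z, ζ - z⟫_ℂ‖ ^ 2)) := by
    ext ε
    simp only [mem_ofPred_eq, mem_kball_iff hE hz, mem_Ioi, max_lt_iff]
    exact ⟨fun h => h.2, fun h => ⟨(norm_nonneg _).trans_lt h.1, h⟩⟩
  rw [kdist, hset, csInf_Ioi]

theorem norm_inner_le_kdist (hE : finrank ℂ E = 2) {z : E} (hz : Orthonormal ℂ ![η z, v z])
    (ζ : E) : ‖⟪η z, ζ - z⟫_ℂ‖ ≤ kdist η v z ζ :=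
  (kdist_eq_max hE hz ζ).symm ▸ le_max_left _ _

theorem kdist_nonneg (hE : finrank ℂ E = 2) {z : E} (hz : Orthonormal ℂ ![η z, v z]) (ζ : E) :
    0 ≤ kdist η v z ζ :=
  (norm_nonneg _).trans (norm_inner_le_kdist hE hz ζ)

theorem sq_norm_inner_le_kdist (hE : finrank ℂ E = 2) {z : E} (hz : Orthonormal ℂ ![η z, v z])
    (ζ : E) : ‖⟪v z, ζ - z⟫_ℂ‖ ^ 2 ≤ kdist η v z ζ :=
  (kdist_eq_max hE hz ζ).symm ▸ le_max_right _ _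

theorem sq_norm_sub_le_kdist (hE : finrank ℂ E = 2) {z : E} (hz : Orthonormal ℂ ![η z, v z])
    (ζ : E) : ‖ζ - z‖ ^ 2 ≤ (‖ζ - z‖ + 1) * kdist η v z ζ := by
  have hη : ‖⟪η z, ζ - z⟫_ℂ‖ ≤ ‖ζ - z‖ := norm_inner_le_of_norm_eq_one ℂ (hz.norm_eq_one 0) _
  have hnormal := norm_inner_le_kdist hE hz ζ
  have htangent := sq_norm_inner_le_kdist hE hz ζ
  rw [hz.sq_norm_eq_of_finrank_eq_two hE]
  nlinarith [norm_nonneg ⟪η z, ζ - z⟫_ℂ]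

variable {S : Set E} (hE : finrank ℂ E = 2) (hS : Bornology.IsBounded S)
  (hframe : ∀ z ∈ S, Orthonormal ℂ ![η z, v z]) {L : ℝ≥0} (hη : LipschitzOnWith L η S)
include hE hS hframe

theorem sq_norm_sub_le_diam_mul_kdist {z ζ : E} (hz : z ∈ S) (hζ : ζ ∈ S) :
    ‖ζ - z‖ ^ 2 ≤ (diam S + 1) * kdist η v z ζ := by
  have hdiam : ‖ζ - z‖ ≤ diam S := by
    rw [← dist_eq_norm]; exact dist_le_diam_of_mem hS hζ hz
  have hsq := sq_norm_sub_le_kdist hE (hframe z hz) ζ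
  have hδ := kdist_nonneg hE (hframe z hz) ζ
  nlinarith

include hη

theorem kdist_swap_le {z ζ : E} (hz : z ∈ S) (hζ : ζ ∈ S) :
    kdist η v ζ z ≤ (1 + (L + 2) * (diam S + 1)) * kdist η v z ζ := by
  set δ := kdist η v z ζ
  have hδ : 0 ≤ δ := kdist_nonneg hE (hframe z hz) ζ
  have hsq := sq_norm_sub_le_diam_mul_kdist hE hS hframe hz hζ
  have hdiam : 0 ≤ diam S := diam_nonneg
  have hLip : ‖η ζ - η z‖ ≤ L * ‖ζ - z‖ := by
    simpa only [dist_eq_norm] using hη.dist_le_mul ζ hζ z hz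
  rw [kdist_eq_max hE (hframe ζ hζ), ← neg_sub ζ z]
  apply max_le
  · have hshift := norm_inner_le_norm_inner_add ℂ (η ζ) (η z) (ζ - z)
    have hnormal := norm_inner_le_kdist hE (hframe z hz) ζ
    rw [inner_neg_right, norm_neg]
    nlinarith [mul_le_mul_of_nonneg_right hLip (norm_nonneg (ζ - z)), L.2]
  · have hv : ‖v ζ‖ = 1 := (hframe ζ hζ).norm_eq_one 1
    have htangent := norm_inner_le_of_norm_eq_one ℂ hv (-(ζ - z))
    rw [norm_neg] at htangent
    nlinarith [pow_le_pow_left₀ (norm_nonneg _) htangent 2, L.2]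

theorem kdist_le_mul_add {z ζ ξ : E} (hz : z ∈ S) (hζ : ζ ∈ S) (hξ : ξ ∈ S) :
    kdist η v z ζ ≤ (1 + (L + 2) * (diam S + 1)) * (kdist η v z ξ + kdist η v ξ ζ) := by
  set δ₁ := kdist η v z ξ
  set δ₂ := kdist η v ξ ζ
  have hδ₁ := norm_inner_le_kdist hE (hframe z hz) ξ
  have hδ₂ := norm_inner_le_kdist hE (hframe ξ hξ) ζ
  have hsq₁ := sq_norm_sub_le_diam_mul_kdist hE hS hframe hz hξ
  have hsq₂ := sq_norm_sub_le_diam_mul_kdist hE hS hframe hξ hζ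
  have hdiam : 0 ≤ diam S := diam_nonneg
  have hLip : ‖η z - η ξ‖ ≤ L * ‖ξ - z‖ := by
    simpa only [dist_eq_norm, norm_sub_rev z ξ] using hη.dist_le_mul z hz ξ hξ
  have hsplit : ζ - z = (ξ - z) + (ζ - ξ) := by abel
  rw [kdist_eq_max hE (hframe z hz)]
  apply max_le
  · have hshift := norm_inner_le_norm_inner_add ℂ (η z) (η ξ) (ζ - ξ)
    rw [hsplit, inner_add_right]
    refine (norm_add_le _ _).trans ?_
    nlinarith [mul_le_mul_of_nonneg_right hLip (norm_nonneg (ζ - ξ)), L.2,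
      sq_nonneg (‖ξ - z‖ - ‖ζ - ξ‖), norm_nonneg (ξ - z), norm_nonneg (ζ - ξ),
      norm_nonneg ⟪η z, ξ - z⟫_ℂ, norm_nonneg ⟪η ξ, ζ - ξ⟫_ℂ]
  · have hv := norm_inner_le_of_norm_eq_one ℂ ((hframe z hz).norm_eq_one 1 : ‖v z‖ = 1) (ζ - z)
    have htri : ‖ζ - z‖ ≤ ‖ξ - z‖ + ‖ζ - ξ‖ := hsplit ▸ norm_add_le _ _
    have hδ : 0 ≤ δ₁ + δ₂ := add_nonneg (kdist_nonneg hE (hframe z hz) ξ)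
      (kdist_nonneg hE (hframe ξ hξ) ζ)
    calc ‖⟪v z, ζ - z⟫_ℂ‖ ^ 2 ≤ (‖ξ - z‖ + ‖ζ - ξ‖) ^ 2 := by gcongr; exact hv.trans htri
      _ ≤ 2 * (diam S + 1) * (δ₁ + δ₂) := by nlinarith [sq_nonneg (‖ξ - z‖ - ‖ζ - ξ‖)]
      _ ≤ (1 + (L + 2) * (diam S + 1)) * (δ₁ + δ₂) := by gcongr; nlinarith [L.2]

end Koranyi

theorem koranyi_pseudodistance_general
    (ρ : EuclideanSpace ℂ (Fin 2) → ℝ)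
    (hρ : ContDiff ℝ (⊤ : ℕ∞) ρ)
    (hconv : StrictConvexOn ℝ Set.univ ρ)
    (hbd : Bornology.IsBounded {z | ρ z < 0})
    (hne : Set.Nonempty {z | ρ z < 0})
    (U₀ : Set (EuclideanSpace ℂ (Fin 2))) (hU₀ : IsOpen U₀)
    (hbDU₀ : {z | ρ z = 0} ⊆ U₀)
    (η v : EuclideanSpace ℂ (Fin 2) → EuclideanSpace ℂ (Fin 2))
    (hηsm : ContDiffOn ℝ (⊤ : ℕ∞) η U₀)
    (hηunit : ∀ ζ ∈ U₀, ‖η ζ‖ = 1)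
    (hvunit : ∀ ζ ∈ U₀, ‖v ζ‖ = 1)
    (hvtang : ∀ ζ ∈ U₀, (inner ℂ (η ζ) (v ζ) : ℂ) = 0) :
    ∃ (𝒰 : Set (EuclideanSpace ℂ (Fin 2))) (c₁ : ℝ),
      IsOpen 𝒰 ∧ {z | ρ z = 0} ⊆ 𝒰 ∧ 𝒰 ⊆ U₀ ∧ 0 < c₁ ∧
      (∀ z ∈ 𝒰, ∀ ζ ∈ 𝒰,
        (1 / c₁) * kdist η v ζ z ≤ kdist η v z ζ ∧ kdist η v z ζ ≤ c₁ * kdist η v ζ z) ∧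
      (∀ z ∈ 𝒰, ∀ ζ ∈ 𝒰, ∀ ξ ∈ 𝒰,
        kdist η v z ζ ≤ c₁ * (kdist η v z ξ + kdist η v ξ ζ)) := by
  have hbD : IsCompact {z | ρ z = 0} :=
    isCompact_of_isClosed_isBounded (isClosed_eq hρ.continuous continuous_const)
      (hbd.closure.subset fun z hz => hconv.setOf_le_subset_closure_setOf_lt hne hz.le)
  obtain ⟨ε, hε, hεU₀⟩ := hbD.exists_cthickening_subset_open hU₀ hbDU₀
  obtain ⟨L, hL⟩ := hηsm.exists_lipschitzOnWith_of_isCompact_subset (by simp) hU₀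
    hbD.cthickening hεU₀
  set 𝒰 := thickening ε {z | ρ z = 0}
  have h𝒰 : 𝒰 ⊆ cthickening ε {z | ρ z = 0} := thickening_subset_cthickening ε _
  have h𝒰U₀ : 𝒰 ⊆ U₀ := h𝒰.trans hεU₀
  have hE : finrank ℂ (EuclideanSpace ℂ (Fin 2)) = 2 := finrank_euclideanSpace_fin
  have hframe : ∀ z ∈ 𝒰, Orthonormal ℂ ![η z, v z] := fun z hz => by
    simp [hηunit z (h𝒰U₀ hz), hvunit z (h𝒰U₀ hz), hvtang z (h𝒰U₀ hz)]
  have hbdd : Bornology.IsBounded 𝒰 := hbD.cthickening.isBounded.subset h𝒰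
  have hL𝒰 := hL.mono h𝒰
  have hc : 0 < 1 + (L + 2) * (diam 𝒰 + 1) := by positivity
  refine ⟨𝒰, _, isOpen_thickening, self_subset_thickening hε _, h𝒰U₀, hc,
    fun z hz ζ hζ => ⟨?_, kdist_swap_le hE hbdd hframe hL𝒰 hζ hz⟩,
    fun z hz ζ hζ ξ hξ => kdist_le_mul_add hE hbdd hframe hL𝒰 hz hζ hξ⟩
  rw [one_div, inv_mul_le_iff₀ hc]
  exact kdist_swap_le hE hbdd hframe hL𝒰 hz hζ

/-- On a strictly convex domain `D = {ρ < 0} ⊆ ℂ²`, the function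
`δ(z,ζ) = inf{ε > 0 : ζ ∈ P_ε(z)}` is a pseudo-distance near `bD`: it is quasi-symmetric and
satisfies a quasi-triangle inequality. -/
theorem koranyi_pseudodistance
    (ρ : EuclideanSpace ℂ (Fin 2) → ℝ)
    (hρ : ContDiff ℝ (⊤ : ℕ∞) ρ)
    (hconv : StrictConvexOn ℝ Set.univ ρ)
    (hbd : Bornology.IsBounded {z | ρ z < 0})
    (hne : Set.Nonempty {z | ρ z < 0})
    (U₀ : Set (EuclideanSpace ℂ (Fin 2))) (hU₀ : IsOpen U₀)
    (hbDU₀ : {z | ρ z = 0} ⊆ U₀)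
    (hgrad : ∀ z ∈ U₀, fderiv ℝ ρ z ≠ 0)
    (η v : EuclideanSpace ℂ (Fin 2) → EuclideanSpace ℂ (Fin 2))
    (hηsm : ContDiffOn ℝ (⊤ : ℕ∞) η U₀) (hvsm : ContDiffOn ℝ (⊤ : ℕ∞) v U₀)
    (hηunit : ∀ ζ ∈ U₀, ‖η ζ‖ = 1)
    (hηout : ∀ ζ ∈ U₀, 0 < fderiv ℝ ρ ζ (η ζ))
    (hηnormal : ∀ ζ ∈ U₀, ∀ w, (inner ℂ (η ζ) w : ℂ).re = 0 → fderiv ℝ ρ ζ w = 0)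
    (hvunit : ∀ ζ ∈ U₀, ‖v ζ‖ = 1)
    (hvtang : ∀ ζ ∈ U₀, (inner ℂ (η ζ) (v ζ) : ℂ) = 0) :
    ∃ (𝒰 : Set (EuclideanSpace ℂ (Fin 2))) (c₁ : ℝ),
      IsOpen 𝒰 ∧ {z | ρ z = 0} ⊆ 𝒰 ∧ 𝒰 ⊆ U₀ ∧ 0 < c₁ ∧
      (∀ z ∈ 𝒰, ∀ ζ ∈ 𝒰,
        (1 / c₁) * kdist η v ζ z ≤ kdist η v z ζ ∧ kdist η v z ζ ≤ c₁ * kdist η v ζ z) ∧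
      (∀ z ∈ 𝒰, ∀ ζ ∈ 𝒰, ∀ ξ ∈ 𝒰,
        kdist η v z ζ ≤ c₁ * (kdist η v z ξ + kdist η v ξ ζ)) :=
  koranyi_pseudodistance_general ρ hρ hconv hbd hne U₀ hU₀ hbDU₀ η v hηsm hηunit hvunit hvtang

end
end

section
/- For every integer k ≥ 1, every q ∈ [1,∞) and all real numbers 0 < θ₁ < θ₂ < 1, there exists a constant C > 0 (depending only on k, q, θ₁, θ₂) such that for every R > 0, every function h holomorphic on a neighborhood of the closed disc {ξ ∈ ℂ : |ξ| ≤ R}, and all pairwise distinct λ₁, …, λ_k in the closed disc {|ξ| ≤ θ₁R}, one has |h[λ₁, …, λ_k]|^q ≤ C · R^{−(k−1)q−2} · ∫_{θ₂R ≤ |ξ| ≤ R} |h(ξ)|^q dV(ξ), where dV is the Lebesgue measure on ℂ. -/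
/-!
Hermite's formula `h[λ₁,…,λ_k] = (2πi)⁻¹ ∮_{|ξ| = r} h(ξ) / ∏ⱼ (ξ - λⱼ) dξ` holds on every circle
`|ξ| = r` with `θ₂R ≤ r ≤ R`; it follows from the recursion of divided differences through the
partial fraction identity `1/∏_{init} - 1/∏_{tail} = (λ₁ - λ_k)/∏_{all}`. On such a circle each
factor `|ξ - λⱼ|` is at least `(θ₂ - θ₁)R`, so `|h[λ]| ≲ R^{1-k}` times the average of `|h|` over
the circle, and by Jensen `|h[λ]|^q ≲ R^{(1-k)q}` times the average of `|h|^q`. Integrating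
against `2πr dr` over `[θ₂R, R]` turns these circle averages into the integral over the annulus.
-/

noncomputable section

open MeasureTheory Metric Set Real

def nodeProd (l : List ℂ) (ξ : ℂ) : ℂ := (l.map (ξ - ·)).prod

@[simp]
lemma nodeProd_nil (ξ : ℂ) : nodeProd [] ξ = 1 := rfl

@[simp]
lemma nodeProd_cons (μ : ℂ) (l : List ℂ) (ξ : ℂ) :
    nodeProd (μ :: l) ξ = (ξ - μ) * nodeProd l ξ := rfl

lemma nodeProd_append (l m : List ℂ) (ξ : ℂ) :
    nodeProd (l ++ m) ξ = nodeProd l ξ * nodeProd m ξ := by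
  simp [nodeProd]

lemma nodeProd_eq_zero_iff {l : List ℂ} {ξ : ℂ} : nodeProd l ξ = 0 ↔ ξ ∈ l := by
  simp [nodeProd, List.prod_eq_zero_iff, sub_eq_zero]

lemma continuous_nodeProd (l : List ℂ) : Continuous (nodeProd l) :=
  continuous_list_prod l fun _ _ ↦ continuous_id.sub continuous_const

lemma pow_le_norm_nodeProd {l : List ℂ} {ξ : ℂ} {d : ℝ} (hd : 0 ≤ d)
    (hl : ∀ μ ∈ l, d ≤ ‖ξ - μ‖) : d ^ l.length ≤ ‖nodeProd l ξ‖ := by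
  induction l with
  | nil => simp
  | cons μ l ih =>
    rw [List.length_cons, pow_succ', nodeProd_cons, norm_mul]
    exact mul_le_mul (hl μ List.mem_cons_self) (ih fun x hx ↦ hl x (List.mem_cons_of_mem μ hx))
      (by positivity) (norm_nonneg _)

lemma inv_nodeProd_dropLast_sub_inv_nodeProd (z w : ℂ) (l : List ℂ) {ξ : ℂ}
    (hξ : ξ ∉ z :: w :: l) :
    (nodeProd (z :: (w :: l).dropLast) ξ)⁻¹ - (nodeProd (w :: l) ξ)⁻¹ =
      (z - (w :: l).getLast (List.cons_ne_nil w l)) * (nodeProd (z :: w :: l) ξ)⁻¹ := by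
  have hsplit : nodeProd (w :: l) ξ = nodeProd (w :: l).dropLast ξ *
      (ξ - (w :: l).getLast (List.cons_ne_nil w l)) := by
    conv_lhs => rw [← List.dropLast_append_getLast (List.cons_ne_nil w l)]
    simp [nodeProd_append]
  have hne : nodeProd (z :: w :: l) ξ ≠ 0 := mt nodeProd_eq_zero_iff.mp hξ
  rw [nodeProd_cons z (w :: l), hsplit] at hne ⊢
  rw [nodeProd_cons]
  obtain ⟨hz, hm, hy⟩ := by simpa only [mul_ne_zero_iff] using hne
  field_simp
  ring

lemma circleIntegrable_inv_nodeProd_smul {h : ℂ → ℂ} {c : ℂ} {r : ℝ} (hr : 0 ≤ r)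
    (hh : ContinuousOn h (sphere c r)) {l : List ℂ} (hl : ∀ μ ∈ l, μ ∈ ball c r) :
    CircleIntegrable (fun ξ ↦ (nodeProd l ξ)⁻¹ • h ξ) c r := by
  refine ContinuousOn.circleIntegrable hr (.fun_smul ?_ hh)
  exact (continuous_nodeProd l).continuousOn.inv₀ fun ξ hξ hzero ↦
    sphere_disjoint_ball.ne_of_mem hξ (hl ξ (nodeProd_eq_zero_iff.mp hzero)) rfl

theorem divDiff_eq_circleIntegral {h : ℂ → ℂ} {c : ℂ} {r : ℝ}
    (hd : DiffContOnCl ℂ h (ball c r)) {l : List ℂ} (hl : l ≠ [])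
    (hp : l.Pairwise (· ≠ ·)) (hmem : ∀ μ ∈ l, μ ∈ ball c r) :
    divDiff h l = (2 * π * Complex.I)⁻¹ • ∮ ξ in C(c, r), (nodeProd l ξ)⁻¹ • h ξ := by
  induction l using divDiff.induct with
  | case1 => exact absurd rfl hl
  | case2 z =>
    rw [divDiff, ← hd.two_pi_i_inv_smul_circleIntegral_sub_inv_smul (hmem z List.mem_cons_self)]
    simp
  | case3 z w l ih₁ ih₂ =>
    set y := (w :: l).getLast (List.cons_ne_nil w l)
    have hr : 0 ≤ r := (pos_of_mem_ball (hmem z List.mem_cons_self)).le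
    have hsc : ContinuousOn h (sphere c r) := hd.continuousOn_ball.mono sphere_subset_closedBall
    have hsub₁ : (z :: (w :: l).dropLast).Sublist (z :: w :: l) :=
      (List.dropLast_sublist _).cons_cons z
    have hsub₂ : (w :: l).Sublist (z :: w :: l) := List.sublist_cons_self z _
    have hmem₁ : ∀ μ ∈ z :: (w :: l).dropLast, μ ∈ ball c r := fun μ hμ ↦ hmem μ (hsub₁.subset hμ)
    have hmem₂ : ∀ μ ∈ w :: l, μ ∈ ball c r := fun μ hμ ↦ hmem μ (hsub₂.subset hμ)
    have hzy : z - y ≠ 0 := sub_ne_zero.mpr ((List.pairwise_cons.mp hp).1 _ (List.getLast_mem _))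
    have hsub : (∮ ξ in C(c, r), (nodeProd (z :: (w :: l).dropLast) ξ)⁻¹ • h ξ) -
        ∮ ξ in C(c, r), (nodeProd (w :: l) ξ)⁻¹ • h ξ =
          (z - y) • ∮ ξ in C(c, r), (nodeProd (z :: w :: l) ξ)⁻¹ • h ξ := by
      rw [← circleIntegral.integral_sub (circleIntegrable_inv_nodeProd_smul hr hsc hmem₁)
        (circleIntegrable_inv_nodeProd_smul hr hsc hmem₂), ← circleIntegral.integral_smul]
      refine circleIntegral.integral_congr hr fun ξ hξ ↦ ?_
      have hξ : ξ ∉ z :: w :: l := fun hξl ↦ sphere_disjoint_ball.ne_of_mem hξ (hmem ξ hξl) rfl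
      simp only [smul_eq_mul, ← sub_mul, inv_nodeProd_dropLast_sub_inv_nodeProd z w l hξ, mul_assoc,
        y]
    rw [divDiff, ih₁ (List.cons_ne_nil _ _) (hp.sublist hsub₁) hmem₁,
      ih₂ (List.cons_ne_nil _ _) (hp.sublist hsub₂) hmem₂, ← smul_sub, hsub, smul_comm,
      smul_eq_mul (z - y), mul_div_cancel_left₀ _ hzy]

lemma norm_circleIntegral_le_circleAverage {E : Type*} [NormedAddCommGroup E] [NormedSpace ℂ E]
    (f : ℂ → E) (c : ℂ) (R : ℝ) :
    ‖∮ z in C(c, R), f z‖ ≤ 2 * π * |R| * circleAverage (‖f ·‖) c R := by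
  calc ‖∮ z in C(c, R), f z‖
      ≤ ∫ θ in 0..2 * π, ‖deriv (circleMap c R) θ • f (circleMap c R θ)‖ :=
        intervalIntegral.norm_integral_le_integral_norm two_pi_pos.le
    _ = ∫ θ in 0..2 * π, |R| * ‖f (circleMap c R θ)‖ := by simp [norm_smul, deriv_circleMap]
    _ = 2 * π * |R| * circleAverage (‖f ·‖) c R := by
      rw [intervalIntegral.integral_const_mul, circleAverage_def, smul_eq_mul]
      field_simp

theorem norm_divDiff_mul_pow_le {h : ℂ → ℂ} {c : ℂ} {r s : ℝ} (hr : 0 ≤ r) (hsr : s < r)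
    (hd : DiffContOnCl ℂ h (ball c r)) {l : List ℂ} (hp : l.Pairwise (· ≠ ·))
    (hl : ∀ μ ∈ l, ‖μ - c‖ ≤ s) :
    ‖divDiff h l‖ * (r - s) ^ l.length ≤ r * circleAverage (‖h ·‖) c r := by
  rcases eq_or_ne l [] with rfl | hne
  · simpa [divDiff] using mul_nonneg hr (circleAverage_nonneg_of_nonneg fun _ _ ↦ norm_nonneg _)
  have hmem : ∀ μ ∈ l, μ ∈ ball c r := fun μ hμ ↦ mem_ball_iff_norm.mpr ((hl μ hμ).trans_lt hsr)
  have hrs : 0 < r - s := sub_pos.mpr hsr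
  have hsc : ContinuousOn h (sphere c r) := hd.continuousOn_ball.mono sphere_subset_closedBall
  have hkernel : ∀ ξ ∈ sphere c |r|, ‖(nodeProd l ξ)⁻¹ • h ξ‖ ≤ ((r - s) ^ l.length)⁻¹ * ‖h ξ‖ := by
    intro ξ hξ
    rw [abs_of_nonneg hr, mem_sphere_iff_norm] at hξ
    have hlow : (r - s) ^ l.length ≤ ‖nodeProd l ξ‖ := by
      refine pow_le_norm_nodeProd hrs.le fun μ hμ ↦ ?_
      calc r - s ≤ ‖ξ - c‖ - ‖μ - c‖ := by linarith [hl μ hμ]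
        _ ≤ ‖ξ - μ‖ := by simpa using norm_sub_norm_le (ξ - c) (μ - c)
    rw [norm_smul, norm_inv]
    gcongr
  have havg : circleAverage (fun ξ ↦ ‖(nodeProd l ξ)⁻¹ • h ξ‖) c r ≤
      ((r - s) ^ l.length)⁻¹ * circleAverage (‖h ·‖) c r := by
    rw [← smul_eq_mul, ← circleAverage_fun_smul]
    exact circleAverage_mono (circleIntegrable_inv_nodeProd_smul hr hsc hmem).norm
      (hsc.norm.circleIntegrable hr).const_smul hkernel
  rw [divDiff_eq_circleIntegral hd hne hp hmem, norm_smul]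
  calc ‖(2 * π * Complex.I)⁻¹‖ * ‖∮ ξ in C(c, r), (nodeProd l ξ)⁻¹ • h ξ‖ * (r - s) ^ l.length
      ≤ (2 * π)⁻¹ * (2 * π * r * circleAverage (fun ξ ↦ ‖(nodeProd l ξ)⁻¹ • h ξ‖) c r) *
          (r - s) ^ l.length := by
        gcongr
        · simp [abs_of_pos pi_pos]
        · simpa [abs_of_nonneg hr] using
            norm_circleIntegral_le_circleAverage (fun ξ ↦ (nodeProd l ξ)⁻¹ • h ξ) c r
    _ ≤ (2 * π)⁻¹ * (2 * π * r * (((r - s) ^ l.length)⁻¹ * circleAverage (‖h ·‖) c r)) *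
          (r - s) ^ l.length := by gcongr
    _ = r * circleAverage (‖h ·‖) c r := by field_simp

theorem rpow_circleAverage_le {f : ℂ → ℝ} {c : ℂ} {R q : ℝ} (hq : 1 ≤ q)
    (hf₀ : ∀ z ∈ sphere c |R|, 0 ≤ f z) (hf : CircleIntegrable f c R)
    (hfq : CircleIntegrable (fun z ↦ f z ^ q) c R) :
    circleAverage f c R ^ q ≤ circleAverage (fun z ↦ f z ^ q) c R := by
  simp only [circleAverage_eq_intervalAverage]
  have hvol : volume (uIoc 0 (2 * π)) = ENNReal.ofReal (2 * π) := by
    simp [uIoc_of_le two_pi_pos.le]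
  exact (convexOn_rpow hq).map_set_average_le
    (continuousOn_id.rpow_const fun _ _ ↦ Or.inr (by linarith)) isClosed_Ici
    (hvol ▸ (ENNReal.ofReal_pos.mpr two_pi_pos).ne') (hvol ▸ ENNReal.ofReal_ne_top)
    (ae_of_all _ fun θ ↦ hf₀ _ (circleMap_mem_sphere' c R θ)) hf.def' hfq.def'

lemma Complex.polarCoord_symm_eq_circleMap (p : ℝ × ℝ) :
    Complex.polarCoord.symm p = circleMap 0 p.1 p.2 := by
  rw [Complex.polarCoord_symm_apply, circleMap, Complex.exp_mul_I]
  push_cast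
  ring

lemma circleAverage_eq_setIntegral_Ioo {E : Type*} [NormedAddCommGroup E] [NormedSpace ℝ E]
    (g : ℂ → E) (c : ℂ) (r : ℝ) :
    circleAverage g c r = (2 * π)⁻¹ • ∫ θ in Ioo (-π) π, g (circleMap c r θ) := by
  rw [circleAverage_eq_integral_add (-π),
    intervalIntegral.integral_comp_add_right (fun θ ↦ g (circleMap c r θ)),
    intervalIntegral.integral_of_le (by linarith [pi_pos]), integral_Ioc_eq_integral_Ioo]
  ring_nf

theorem integral_annulus_eq_integral_circleAverage {E : Type*} [NormedAddCommGroup E]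
    [NormedSpace ℝ E] {g : ℂ → E} {a b : ℝ} (ha : 0 < a)
    (hg : ContinuousOn g {ξ | a ≤ ‖ξ‖ ∧ ‖ξ‖ ≤ b}) :
    ∫ ξ in {ξ : ℂ | a ≤ ‖ξ‖ ∧ ‖ξ‖ ≤ b}, g ξ =
      ∫ r in Icc a b, (2 * π * r) • circleAverage g 0 r := by
  set A := {ξ : ℂ | a ≤ ‖ξ‖ ∧ ‖ξ‖ ≤ b}
  set S := Icc a b ×ˢ Ioo (-π) π
  set F : ℝ × ℝ → E := fun p ↦ p.1 • g (circleMap 0 p.1 p.2)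
  have hA : MeasurableSet A :=
    (measurableSet_le measurable_const measurable_norm).inter
      (measurableSet_le measurable_norm measurable_const)
  have hS : MeasurableSet S := measurableSet_Icc.prod measurableSet_Ioo
  have hST : S ⊆ polarCoord.target := by
    rw [polarCoord_target]
    exact prod_mono (fun r hr ↦ ha.trans_le hr.1) subset_rfl
  have hpolar : EqOn (fun p ↦ p.1 • A.indicator g (Complex.polarCoord.symm p)) (S.indicator F)
      polarCoord.target := by
    rintro ⟨r, θ⟩ ⟨hr, hθ⟩
    have hr : 0 < r := hr
    have hA_iff : circleMap 0 r θ ∈ A ↔ (r, θ) ∈ S := by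
      simp [A, S, hθ, abs_of_pos hr]
    simp only [Complex.polarCoord_symm_eq_circleMap]
    by_cases hmem : (r, θ) ∈ S
    · rw [indicator_of_mem (hA_iff.mpr hmem), indicator_of_mem hmem]
    · rw [indicator_of_notMem (mt hA_iff.mp hmem), indicator_of_notMem hmem, smul_zero]
  have hFc : ContinuousOn F (Icc a b ×ˢ Icc (-π) π) := by
    refine continuousOn_fst.smul (hg.comp (by fun_prop) fun p hp ↦ ?_)
    simpa [A, abs_of_pos (ha.trans_le hp.1.1)] using hp.1
  have hF : IntegrableOn F S (volume.prod volume) := by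
    rw [← Measure.volume_eq_prod]
    exact (hFc.integrableOn_compact (isCompact_Icc.prod isCompact_Icc)).mono_set
      (prod_mono subset_rfl Ioo_subset_Icc_self)
  calc ∫ ξ in A, g ξ
      = ∫ p in polarCoord.target, p.1 • A.indicator g (Complex.polarCoord.symm p) := by
        rw [← integral_indicator hA, Complex.integral_comp_polarCoord_symm]
    _ = ∫ p in S, F p := by
        rw [setIntegral_congr_fun polarCoord.open_target.measurableSet hpolar,
          integral_indicator hS, Measure.restrict_restrict hS, inter_eq_left.mpr hST]
    _ = ∫ r in Icc a b, ∫ θ in Ioo (-π) π, F (r, θ) := by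
        rw [Measure.volume_eq_prod, setIntegral_prod F hF]
    _ = ∫ r in Icc a b, (2 * π * r) • circleAverage g 0 r := by
        refine setIntegral_congr_fun measurableSet_Icc fun r _ ↦ ?_
        rw [circleAverage_eq_setIntegral_Ioo, smul_smul, integral_smul]
        field_simp

theorem rpow_norm_divDiff_le_circleAverage {h : ℂ → ℂ} {c : ℂ} {r s q : ℝ} (hq : 1 ≤ q)
    (hr : 0 < r) (hsr : s < r) (hd : DiffContOnCl ℂ h (ball c r)) {l : List ℂ}
    (hp : l.Pairwise (· ≠ ·)) (hl : ∀ μ ∈ l, ‖μ - c‖ ≤ s) :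
    (‖divDiff h l‖ * (r - s) ^ l.length / r) ^ q ≤ circleAverage (fun ξ ↦ ‖h ξ‖ ^ q) c r := by
  have hsc : ContinuousOn h (sphere c r) := hd.continuousOn_ball.mono sphere_subset_closedBall
  have hrs : 0 ≤ (r - s) ^ l.length := pow_nonneg (sub_pos.mpr hsr).le _
  calc (‖divDiff h l‖ * (r - s) ^ l.length / r) ^ q ≤ circleAverage (‖h ·‖) c r ^ q := by
        refine rpow_le_rpow (by positivity) ((div_le_iff₀ hr).mpr ?_) (by linarith)
        linarith [norm_divDiff_mul_pow_le hr.le hsr hd hp hl]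
    _ ≤ circleAverage (fun ξ ↦ ‖h ξ‖ ^ q) c r :=
        rpow_circleAverage_le hq (fun _ _ ↦ norm_nonneg _) (hsc.norm.circleIntegrable hr.le)
          ((hsc.norm.rpow_const fun _ _ ↦ Or.inr (by linarith)).circleIntegrable hr.le)

theorem mul_le_integral_annulus_of_le_circleAverage {g : ℂ → ℝ} {a b m : ℝ} (ha : 0 < a)
    (hab : a ≤ b) (hg : ContinuousOn g {ξ | a ≤ ‖ξ‖ ∧ ‖ξ‖ ≤ b})
    (hm : ∀ r ∈ Icc a b, m ≤ circleAverage g 0 r) :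
    π * (b ^ 2 - a ^ 2) * m ≤ ∫ ξ in {ξ : ℂ | a ≤ ‖ξ‖ ∧ ‖ξ‖ ≤ b}, g ξ := by
  have hint : IntegrableOn (fun r ↦ (2 * π * r) • circleAverage g 0 r) (Icc a b) :=
    ((continuousOn_const.mul continuousOn_id).smul (ContinuousOn.circleAverage
      (by simpa using hg) fun r hr ↦ ha.le.trans hr.1)).integrableOn_Icc
  calc π * (b ^ 2 - a ^ 2) * m = ∫ r in Icc a b, (2 * π * r) • m := by
        simp only [smul_eq_mul]
        rw [integral_Icc_eq_integral_Ioc, ← intervalIntegral.integral_of_le hab,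
          intervalIntegral.integral_mul_const, intervalIntegral.integral_const_mul, integral_id]
        ring
    _ ≤ ∫ r in Icc a b, (2 * π * r) • circleAverage g 0 r :=
        setIntegral_mono_on (Continuous.integrableOn_Icc (by fun_prop)) hint measurableSet_Icc
          fun r hr ↦ smul_le_smul_of_nonneg_left (hm r hr)
            (mul_nonneg two_pi_pos.le (ha.le.trans hr.1))
    _ = _ := (integral_annulus_eq_integral_circleAverage ha hg).symm

theorem mul_rpow_norm_divDiff_le_integral_annulus {h : ℂ → ℂ} {R a s q : ℝ} (hq : 1 ≤ q)
    (hsa : s < a) (ha : 0 < a) (haR : a ≤ R) (hh : DifferentiableOn ℂ h (closedBall 0 R))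
    {l : List ℂ} (hp : l.Pairwise (· ≠ ·)) (hl : ∀ μ ∈ l, ‖μ‖ ≤ s) :
    π * (R ^ 2 - a ^ 2) * (‖divDiff h l‖ * (a - s) ^ l.length / R) ^ q ≤
      ∫ ξ in {ξ : ℂ | a ≤ ‖ξ‖ ∧ ‖ξ‖ ≤ R}, ‖h ξ‖ ^ q := by
  refine mul_le_integral_annulus_of_le_circleAverage ha haR
    ((hh.continuousOn.norm.rpow_const fun _ _ ↦ Or.inr (by linarith)).mono
      fun ξ hξ ↦ mem_closedBall_zero_iff.mpr hξ.2) fun r ⟨har, hrR⟩ ↦ ?_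
  have hr : 0 < r := ha.trans_le har
  refine le_trans ?_ (rpow_norm_divDiff_le_circleAverage hq hr (hsa.trans_le har)
    (hh.diffContOnCl_ball (closedBall_subset_closedBall hrR)) hp (by simpa using hl))
  have has : 0 ≤ a - s := sub_nonneg.mpr hsa.le
  have hpow : (a - s) ^ l.length ≤ (r - s) ^ l.length := pow_le_pow_left₀ has (by linarith) _
  have hD : 0 ≤ ‖divDiff h l‖ * (r - s) ^ l.length :=
    mul_nonneg (norm_nonneg _) ((pow_nonneg has _).trans hpow)
  exact rpow_le_rpow (div_nonneg (mul_nonneg (norm_nonneg _) (pow_nonneg has _)) (hr.le.trans hrR))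
    (div_le_div₀ hD (by gcongr) hr hrR) (by linarith)

theorem divDiff_Lq_bound_general (k : ℕ) (q : ℝ) (hq : 1 ≤ q)
    (θ₁ θ₂ : ℝ) (hθ₁ : 0 < θ₁) (hθ₁₂ : θ₁ < θ₂) (hθ₂ : θ₂ < 1) :
    ∃ C > (0 : ℝ), ∀ R > (0 : ℝ), ∀ (h : ℂ → ℂ) (U : Set ℂ), IsOpen U →
      Metric.closedBall (0 : ℂ) R ⊆ U → DifferentiableOn ℂ h U →
      ∀ l : List ℂ, l.length = k → l.Pairwise (· ≠ ·) →
        (∀ x ∈ l, ‖x‖ ≤ θ₁ * R) →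
        ‖divDiff h l‖ ^ q ≤
          C * R ^ (-(((k : ℝ) - 1) * q) - 2) *
            ∫ ξ in {ξ : ℂ | θ₂ * R ≤ ‖ξ‖ ∧ ‖ξ‖ ≤ R},
              ‖h ξ‖ ^ q := by
  set P := π * (1 - θ₂ ^ 2) * ((θ₂ - θ₁) ^ k) ^ q
  have hθ : 0 < θ₂ - θ₁ := sub_pos.mpr hθ₁₂
  have hP : 0 < P := mul_pos (mul_pos pi_pos (by nlinarith)) (rpow_pos_of_pos (pow_pos hθ _) _)
  refine ⟨P⁻¹, inv_pos.mpr hP, fun R hR h U _ hU hdiff l hk hp hl ↦ ?_⟩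
  subst hk
  set D := ‖divDiff h l‖
  set e := ((l.length : ℝ) - 1) * q + 2
  have hI := mul_rpow_norm_divDiff_le_integral_annulus hq (mul_lt_mul_of_pos_right hθ₁₂ hR)
    (mul_pos (hθ₁.trans hθ₁₂) hR) (by nlinarith) (hdiff.mono hU) hp hl
  have hscale : π * (R ^ 2 - (θ₂ * R) ^ 2) * (D * (θ₂ * R - θ₁ * R) ^ l.length / R) ^ q =
      P * R ^ e * D ^ q := by
    have hbase : D * (θ₂ * R - θ₁ * R) ^ l.length / R =
        D * (θ₂ - θ₁) ^ l.length * R ^ ((l.length : ℝ) - 1) := by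
      rw [rpow_sub_one hR.ne', rpow_natCast, ← sub_mul, mul_pow]; ring
    rw [hbase, mul_rpow (by positivity) (by positivity), mul_rpow (by positivity) (by positivity),
      ← rpow_mul hR.le, rpow_add hR, rpow_two]
    ring
  rw [hscale, ← le_div_iff₀' (by positivity)] at hI
  calc D ^ q ≤ _ := hI
    _ = _ := by rw [show -(((l.length : ℝ) - 1) * q) - 2 = -e by ring, rpow_neg hR.le]; field_simp

/-- For every `k ≥ 1`, `q ∈ [1,∞)` and `0 < θ₁ < θ₂ < 1` there is a constant `C > 0` such that
for every `R > 0`, every `h` holomorphic on a neighbourhood of the closed disc of radius `R`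
and all pairwise distinct `λ₁,…,λ_k` with `|λ_i| ≤ θ₁ R`, one has
`|h[λ₁,…,λ_k]|^q ≤ C R^{-(k-1)q-2} ∫_{θ₂R ≤ |ξ| ≤ R} |h(ξ)|^q dV(ξ)`. -/
theorem divDiff_Lq_bound (k : ℕ) (hk : 1 ≤ k) (q : ℝ) (hq : 1 ≤ q)
    (θ₁ θ₂ : ℝ) (hθ₁ : 0 < θ₁) (hθ₁₂ : θ₁ < θ₂) (hθ₂ : θ₂ < 1) :
    ∃ C > (0 : ℝ), ∀ R > (0 : ℝ), ∀ (h : ℂ → ℂ) (U : Set ℂ), IsOpen U →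
      Metric.closedBall (0 : ℂ) R ⊆ U → DifferentiableOn ℂ h U →
      ∀ l : List ℂ, l.length = k → l.Pairwise (· ≠ ·) →
        (∀ x ∈ l, ‖x‖ ≤ θ₁ * R) →
        ‖divDiff h l‖ ^ q ≤
          C * R ^ (-(((k : ℝ) - 1) * q) - 2) *
            ∫ ξ in {ξ : ℂ | θ₂ * R ≤ ‖ξ‖ ∧ ‖ξ‖ ≤ R},
              ‖h ξ‖ ^ q :=
  divDiff_Lq_bound_general k q hq θ₁ θ₂ hθ₁ hθ₁₂ hθ₂
end
end
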